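/- Let φ, Φ ∈ ℂ with Re(Φ·conj(φ)) > 0 and T a bounded linear operator on a complex Hilbert space with Re⟨Φx − Tx, Tx − φx⟩ ≥ 0 for all unit vectors x. Then ‖T‖² − w(T)² ≤ |(Φ − φ)/(Φ + φ)|²·‖T‖². -/

import Mathlib

/-! The hypothesis says, for unit `x`, that `‖T x‖² + Re(Φ φ̄) ≤ Re((Φ + φ) ⟪T x, x⟫)`, so
`‖T x‖² + Re(Φ φ̄) ≤ |Φ + φ| w(T)`. By AM-GM the left side is at least `2 √(Re(Φ φ̄)) ‖T x‖`,
whence `4 Re(Φ φ̄) ‖T‖² ≤ |Φ + φ|² w(T)²`; the claim follows from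
`|Φ + φ|² - |Φ - φ|² = 4 Re(Φ φ̄)`. -/

noncomputable def numRadius {H : Type*} [NormedAddCommGroup H] [InnerProductSpace ℂ H]
    (T : H →L[ℂ] H) : ℝ :=
  sSup {r : ℝ | ∃ x : H, ‖x‖ = 1 ∧ r = ‖(inner ℂ (T x) x : ℂ)‖}

open ComplexConjugate

section InnerProductSpace

variable {H : Type*} [NormedAddCommGroup H] [InnerProductSpace ℂ H]

theorem bddAbove_numRadius_set (T : H →L[ℂ] H) :
    BddAbove {r : ℝ | ∃ x : H, ‖x‖ = 1 ∧ r = ‖(inner ℂ (T x) x : ℂ)‖} := by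
  refine ⟨‖T‖, ?_⟩
  rintro r ⟨x, hx, rfl⟩
  calc ‖(inner ℂ (T x) x : ℂ)‖ ≤ ‖T x‖ * ‖x‖ := norm_inner_le_norm _ _
    _ ≤ ‖T‖ * ‖x‖ * ‖x‖ := by gcongr; exact T.le_opNorm x
    _ = ‖T‖ := by rw [hx, mul_one, mul_one]

theorem norm_inner_le_numRadius (T : H →L[ℂ] H) {x : H} (hx : ‖x‖ = 1) :
    ‖(inner ℂ (T x) x : ℂ)‖ ≤ numRadius T :=
  le_csSup (bddAbove_numRadius_set T) ⟨x, hx, rfl⟩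

theorem numRadius_nonneg (T : H →L[ℂ] H) : 0 ≤ numRadius T :=
  Real.sSup_nonneg fun _ ⟨_, _, hr⟩ => hr ▸ norm_nonneg _

theorem re_inner_smul_sub_sub_smul (x y : H) (Φ φ : ℂ) :
    (inner ℂ (Φ • x - y) (y - φ • x) : ℂ).re =
      ((Φ + φ) * inner ℂ y x).re - (Φ * conj φ).re * ‖x‖ ^ 2 - ‖y‖ ^ 2 := by
  have inner_self (z : H) : inner ℂ z z = ((‖z‖ ^ 2 : ℝ) : ℂ) := by simp
  rw [inner_sub_left, inner_sub_right, inner_sub_right, inner_smul_left, inner_smul_left,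
    inner_smul_right, inner_smul_right, ← inner_conj_symm y x, inner_self, inner_self]
  simp only [Complex.sub_re, Complex.add_re, Complex.add_im, Complex.mul_re, Complex.mul_im,
    Complex.conj_re, Complex.conj_im, Complex.ofReal_re, Complex.ofReal_im]
  ring

end InnerProductSpace

theorem Complex.sq_norm_add_sub_sq_norm_sub (a b : ℂ) :
    ‖a + b‖ ^ 2 - ‖a - b‖ ^ 2 = 4 * (a * conj b).re := by
  rw [Complex.sq_norm, Complex.sq_norm, Complex.normSq_add, Complex.normSq_sub]
  ring

theorem ContinuousLinearMap.four_mul_opNorm_sq_le_of_norm_sq_add_le {𝕜 E F : Type*}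
    [NontriviallyNormedField 𝕜] [NormedAlgebra ℝ 𝕜] [NormedAddCommGroup E] [NormedSpace 𝕜 E]
    [NormedAddCommGroup F] [NormedSpace 𝕜 F] (f : E →L[𝕜] F) {c K : ℝ} (hc : 0 < c)
    (hK : 0 ≤ K) (h : ∀ x, ‖x‖ = 1 → ‖f x‖ ^ 2 + c ≤ K) : 4 * c * ‖f‖ ^ 2 ≤ K ^ 2 := by
  have hsqrt : 0 < √c := Real.sqrt_pos.mpr hc
  have hbound : ‖f‖ ≤ K / (2 * √c) := by
    refine f.opNorm_le_of_unit_norm (by positivity) fun x hx => ?_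
    rw [le_div_iff₀ (by positivity)]
    nlinarith [h x hx, sq_nonneg (‖f x‖ - √c), Real.sq_sqrt hc.le]
  rw [le_div_iff₀ (by positivity)] at hbound
  calc 4 * c * ‖f‖ ^ 2 = (‖f‖ * (2 * √c)) ^ 2 := by rw [mul_pow, mul_pow, Real.sq_sqrt hc.le]; ring
    _ ≤ K ^ 2 := by gcongr

theorem stmt_11_general {H : Type*} [NormedAddCommGroup H] [InnerProductSpace ℂ H]
    (T : H →L[ℂ] H) (phi Phi : ℂ) (hre : 0 < (Phi * starRingEnd ℂ phi).re)
    (h : ∀ x : H, ‖x‖ = 1 → 0 ≤ (inner ℂ (Phi • x - T x) (T x - phi • x) : ℂ).re) :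
    ‖T‖ ^ 2 - numRadius T ^ 2 ≤
      ‖(Phi - phi) / (Phi + phi)‖ ^ 2 * ‖T‖ ^ 2 := by
  have hpointwise : ∀ x : H, ‖x‖ = 1 →
      ‖T x‖ ^ 2 + (Phi * conj phi).re ≤ ‖Phi + phi‖ * numRadius T := by
    intro x hx
    have hnonneg := h x hx
    rw [re_inner_smul_sub_sub_smul, hx, one_pow, mul_one] at hnonneg
    calc ‖T x‖ ^ 2 + (Phi * conj phi).re ≤ ((Phi + phi) * inner ℂ (T x) x).re := by linarith
      _ ≤ ‖Phi + phi‖ * ‖(inner ℂ (T x) x : ℂ)‖ := by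
        rw [← norm_mul]; exact Complex.re_le_norm _
      _ ≤ ‖Phi + phi‖ * numRadius T := by gcongr; exact norm_inner_le_numRadius T hx
  have hT := T.four_mul_opNorm_sq_le_of_norm_sq_add_le hre
    (mul_nonneg (norm_nonneg _) (numRadius_nonneg T)) hpointwise
  have hsum_pos : 0 < ‖Phi + phi‖ := by
    nlinarith [Complex.sq_norm_add_sub_sq_norm_sub Phi phi, sq_nonneg ‖Phi - phi‖,
      norm_nonneg (Phi + phi)]
  rw [norm_div, div_pow, div_mul_eq_mul_div, le_div_iff₀ (by positivity)]
  linear_combination hT + ‖T‖ ^ 2 * Complex.sq_norm_add_sub_sq_norm_sub Phi phi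

theorem stmt_11 {H : Type*} [NormedAddCommGroup H] [InnerProductSpace ℂ H] [CompleteSpace H]
    (T : H →L[ℂ] H) (phi Phi : ℂ) (hre : 0 < (Phi * starRingEnd ℂ phi).re)
    (h : ∀ x : H, ‖x‖ = 1 → 0 ≤ (inner ℂ (Phi • x - T x) (T x - phi • x) : ℂ).re) :
    ‖T‖ ^ 2 - numRadius T ^ 2 ≤
      ‖(Phi - phi) / (Phi + phi)‖ ^ 2 * ‖T‖ ^ 2 :=
  stmt_11_general T phi Phi hre h
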